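/- If G is a group and A ⊆ G is a subset whose elements are pairwise non-conjugate in G, then Q(G,A) is isomorphic to the subquandle of Conj(G) consisting of the union of the conjugacy classes of elements of A, via [(a,u)] ↦ u⁻¹ a u. -/
import Mathlib


open Quandles

namespace GA

variable {G : Type*} [Group G]

/-- The equivalence relation on `A × G`: `(a, gh) ~ (a, h)` for `g ∈ C_G(a)`,
i.e. `(a,u) ~ (b,v)` iff `a = b` and `u * v⁻¹` centralizes `a`. -/
def rel (A : Set G) (p q : A × G) : Prop :=
  p.1 = q.1 ∧ p.2 * q.2⁻¹ ∈ Subgroup.centralizer ({(p.1 : G)} : Set G)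

theorem rel_equiv (A : Set G) : Equivalence (rel A) := by
  constructor
  · intro p
    exact ⟨rfl, by simpa using (Subgroup.centralizer ({(p.1 : G)} : Set G)).one_mem⟩
  · rintro p q ⟨h1, h2⟩
    refine ⟨h1.symm, ?_⟩
    have := (Subgroup.centralizer ({(p.1 : G)} : Set G)).inv_mem h2
    simpa [h1] using this
  · rintro p q r ⟨h1, h2⟩ ⟨h1', h2'⟩
    refine ⟨h1.trans h1', ?_⟩
    have := (Subgroup.centralizer ({(p.1 : G)} : Set G)).mul_mem h2 (by rw [h1]; exact h2')
    simpa [mul_assoc] using this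

instance setoid (A : Set G) : Setoid (A × G) := ⟨rel A, rel_equiv A⟩

/-- The `(G,A)`-quandle as a set: the quotient of `A × G` by `(a,gh) ~ (a,h)`, `g ∈ C_G(a)`. -/
def Q (G : Type*) [Group G] (A : Set G) : Type _ := Quotient (setoid A)

/-- The class of `(a,u)` in `Q(G,A)`. -/
def mk {A : Set G} (a : A) (u : G) : Q G A := Quotient.mk (setoid A) (a, u)

/-- representative-level operation `(a,u) * (b,v) = (a, u v⁻¹ b v)`,
written as a left action of `(b,v)` on `(a,u)`. -/
def pop {A : Set G} (x y : A × G) : A × G := (y.1, y.2 * x.2⁻¹ * (x.1 : G) * x.2)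

/-- representative-level inverse operation `(a,u) *⁻¹ (b,v) = (a, u v⁻¹ b⁻¹ v)`. -/
def pinv {A : Set G} (x y : A × G) : A × G := (y.1, y.2 * x.2⁻¹ * (x.1 : G)⁻¹ * x.2)

theorem centralizer_mem_iff {a u : G} : u ∈ Subgroup.centralizer ({a} : Set G) ↔ u * a = a * u := by
  rw [Subgroup.mem_centralizer_singleton_iff]

theorem conj_indep {b v d : G} (h : d * b = b * d) : ((d * v))⁻¹ * b * (d * v) = v⁻¹ * b * v := by
  have h' : d⁻¹ * b * d = b := by
    rw [mul_assoc, ← h]; group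
  calc (d * v)⁻¹ * b * (d * v) = v⁻¹ * (d⁻¹ * b * d) * v := by group
    _ = v⁻¹ * b * v := by rw [h']

theorem pop_well {A : Set G} : ∀ (x₁ y₁ x₂ y₂ : A × G), rel A x₁ x₂ → rel A y₁ y₂ →
    rel A (pop x₁ y₁) (pop x₂ y₂) := by
  rintro ⟨b₁, v₁⟩ ⟨a₁, u₁⟩ ⟨b₂, v₂⟩ ⟨a₂, u₂⟩ ⟨hb, hv⟩ ⟨ha, hu⟩
  refine ⟨ha, ?_⟩
  simp only [pop]
  rw [centralizer_mem_iff] at hv hu ⊢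
  have hb' : (b₁ : G) = (b₂ : G) := congrArg _ hb
  have key : v₁⁻¹ * (b₁ : G) * v₁ = v₂⁻¹ * (b₂ : G) * v₂ := by
    conv_lhs => rw [show v₁ = (v₁ * v₂⁻¹) * v₂ by group, hb']
    exact conj_indep (by rw [← hb']; exact hv)
  have heq : u₁ * v₁⁻¹ * (b₁:G) * v₁ * (u₂ * v₂⁻¹ * (b₂:G) * v₂)⁻¹ = u₁ * u₂⁻¹ := by
    calc u₁ * v₁⁻¹ * (b₁:G) * v₁ * (u₂ * v₂⁻¹ * (b₂:G) * v₂)⁻¹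
        = u₁ * (v₁⁻¹ * (b₁:G) * v₁) * (v₂⁻¹ * (b₂:G) * v₂)⁻¹ * u₂⁻¹ := by group
      _ = u₁ * (v₂⁻¹ * (b₂:G) * v₂) * (v₂⁻¹ * (b₂:G) * v₂)⁻¹ * u₂⁻¹ := by rw [key]
      _ = u₁ * u₂⁻¹ := by group
  rw [heq]
  exact hu

theorem pinv_well {A : Set G} : ∀ (x₁ y₁ x₂ y₂ : A × G), rel A x₁ x₂ → rel A y₁ y₂ →
    rel A (pinv x₁ y₁) (pinv x₂ y₂) := by
  rintro ⟨b₁, v₁⟩ ⟨a₁, u₁⟩ ⟨b₂, v₂⟩ ⟨a₂, u₂⟩ ⟨hb, hv⟩ ⟨ha, hu⟩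
  refine ⟨ha, ?_⟩
  simp only [pinv]
  rw [centralizer_mem_iff] at hv hu ⊢
  have hb' : (b₁ : G) = (b₂ : G) := congrArg _ hb
  have hvc : (v₁ * v₂⁻¹) * (b₂ : G)⁻¹ = (b₂ : G)⁻¹ * (v₁ * v₂⁻¹) := by
    have : Commute (v₁ * v₂⁻¹) (b₂ : G) := by rw [← hb']; exact hv
    exact this.inv_right
  have key : v₁⁻¹ * (b₁ : G)⁻¹ * v₁ = v₂⁻¹ * (b₂ : G)⁻¹ * v₂ := by
    conv_lhs => rw [show v₁ = (v₁ * v₂⁻¹) * v₂ by group, hb']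
    exact conj_indep hvc
  have heq : u₁ * v₁⁻¹ * (b₁:G)⁻¹ * v₁ * (u₂ * v₂⁻¹ * (b₂:G)⁻¹ * v₂)⁻¹ = u₁ * u₂⁻¹ := by
    calc u₁ * v₁⁻¹ * (b₁:G)⁻¹ * v₁ * (u₂ * v₂⁻¹ * (b₂:G)⁻¹ * v₂)⁻¹
        = u₁ * (v₁⁻¹ * (b₁:G)⁻¹ * v₁) * (v₂⁻¹ * (b₂:G)⁻¹ * v₂)⁻¹ * u₂⁻¹ := by group
      _ = u₁ * (v₂⁻¹ * (b₂:G)⁻¹ * v₂) * (v₂⁻¹ * (b₂:G)⁻¹ * v₂)⁻¹ * u₂⁻¹ := by rw [key]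
      _ = u₁ * u₂⁻¹ := by group
  rw [heq]
  exact hu

instance quandle (G : Type*) [Group G] (A : Set G) : Quandle (Q G A) where
  act := Quotient.map₂ pinv (fun _ _ h _ _ h' => pinv_well _ _ _ _ h h')
  invAct := Quotient.map₂ pop (fun _ _ h _ _ h' => pop_well _ _ _ _ h h')
  self_distrib := by
    rintro ⟨⟨b,v⟩⟩ ⟨⟨c,w⟩⟩ ⟨⟨a,u⟩⟩
    refine Quotient.sound ⟨rfl, ?_⟩
    simp only [pinv]
    rw [centralizer_mem_iff]
    group
  left_inv := by
    rintro ⟨⟨b,v⟩⟩ ⟨⟨a,u⟩⟩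
    refine Quotient.sound ⟨rfl, ?_⟩
    simp only [pop, pinv]
    rw [centralizer_mem_iff]
    group
  right_inv := by
    rintro ⟨⟨b,v⟩⟩ ⟨⟨a,u⟩⟩
    refine Quotient.sound ⟨rfl, ?_⟩
    simp only [pop, pinv]
    rw [centralizer_mem_iff]
    group
  fix := by
    rintro ⟨⟨a,u⟩⟩
    refine Quotient.sound ⟨rfl, ?_⟩
    simp only [pinv]
    rw [centralizer_mem_iff]
    have : (u * u⁻¹ * (a:G)⁻¹ * u) * u⁻¹ = (a : G)⁻¹ := by group
    rw [this]
    group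

@[simp] theorem invAct_mk {A : Set G} (a b : A) (u v : G) :
    Rack.invAct (mk b v) (mk a u) = mk a (u * v⁻¹ * (b : G) * v) := rfl

@[simp] theorem act_mk {A : Set G} (a b : A) (u v : G) :
    Shelf.act (mk b v) (mk a u) = mk a (u * v⁻¹ * (b : G)⁻¹ * v) := rfl

end GA

/-- If `G` is a group and `A ⊆ G` a subset whose elements are pairwise non-conjugate in `G`,
then `Q(G,A)` is isomorphic, via `[(a,u)] ↦ u⁻¹ a u`, to the subquandle of `Conj(G)`
consisting of the union of the conjugacy classes of elements of `A`: the map is injective,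
its range is that union, and it intertwines the quandle operation of `Q(G,A)` with
conjugation `(x, y) ↦ y⁻¹ x y` in `G`. -/
theorem GA_iso_conj_classes (G : Type*) [Group G] (A : Set G)
    (hA : ∀ a ∈ A, ∀ b ∈ A, IsConj a b → a = b) :
    ∃ φ : GA.Q G A → G,
      (∀ (a : A) (u : G), φ (GA.mk a u) = u⁻¹ * (a : G) * u) ∧
      Function.Injective φ ∧
      Set.range φ = {g : G | ∃ a ∈ A, IsConj a g} ∧
      (∀ x y : GA.Q G A, φ (Rack.invAct y x) = (φ y)⁻¹ * φ x * φ y) := by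
  refine ⟨Quotient.lift (fun p : A × G => p.2⁻¹ * (p.1 : G) * p.2) ?_, fun a u => rfl, ?_, ?_, ?_⟩
  · rintro ⟨a, u⟩ ⟨b, v⟩ ⟨h1, h2⟩
    have hb : (a : G) = (b : G) := congrArg _ h1
    rw [GA.centralizer_mem_iff] at h2
    have : Commute (u * v⁻¹) (a : G) := h2
    dsimp only
    rw [← hb]
    conv_lhs => rw [show u = (u * v⁻¹) * v by group]
    exact GA.conj_indep h2
  · rintro ⟨⟨a, u⟩⟩ ⟨⟨b, v⟩⟩ h
    have h' : u⁻¹ * (a : G) * u = v⁻¹ * (b : G) * v := h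
    have hconj : IsConj (a : G) (b : G) := by
      rw [isConj_iff]
      refine ⟨v * u⁻¹, ?_⟩
      calc (v * u⁻¹) * (a:G) * (v * u⁻¹)⁻¹ = v * (u⁻¹ * (a:G) * u) * v⁻¹ := by group
        _ = v * (v⁻¹ * (b:G) * v) * v⁻¹ := by rw [h']
        _ = (b:G) := by group
    have hab : (a : G) = (b : G) := hA a a.2 b b.2 hconj
    refine Quotient.sound ⟨Subtype.ext hab, ?_⟩
    rw [GA.centralizer_mem_iff]
    have h'' : u⁻¹ * (a : G) * u = v⁻¹ * (a : G) * v := by rw [h', hab]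
    calc u * v⁻¹ * (a : G) = u * v⁻¹ * (v * (v⁻¹ * (a:G) * v) * v⁻¹) := by group
      _ = u * v⁻¹ * (v * (u⁻¹ * (a:G) * u) * v⁻¹) := by rw [h'']
      _ = (a : G) * (u * v⁻¹) := by group
  · ext g
    constructor
    · rintro ⟨x, rfl⟩
      obtain ⟨⟨a, u⟩⟩ := x
      refine ⟨a, a.2, ?_⟩
      rw [isConj_iff]
      exact ⟨u⁻¹, by show u⁻¹ * (a:G) * u⁻¹⁻¹ = u⁻¹ * (a:G) * u; group⟩
    · rintro ⟨a, ha, hc⟩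
      rw [isConj_iff] at hc
      obtain ⟨c, hc⟩ := hc
      exact ⟨GA.mk ⟨a, ha⟩ c⁻¹, by rw [← hc]; show c⁻¹⁻¹ * a * c⁻¹ = _; group⟩
  · rintro ⟨⟨a, u⟩⟩ ⟨⟨b, v⟩⟩
    show (u * v⁻¹ * (b:G) * v)⁻¹ * (a:G) * (u * v⁻¹ * (b:G) * v) =
      (v⁻¹ * (b:G) * v)⁻¹ * (u⁻¹ * (a:G) * u) * (v⁻¹ * (b:G) * v)
    group
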